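/- Let s ≥ 0 and let T be a sublinear operator satisfying the modular weak-type bound |{x : |Tf(x)| > λ}| ≤ C₀ ∫ (|f|/λ) log^s(e + |f|/λ) dx for all λ > 0. Then for every ϱ ∈ (0,1) and every cube Q ⊂ ℝⁿ, (|Q|^{-1} ∫_Q |T(fχ_Q)(x)|^ϱ dx)^{1/ϱ} ≤ C ‖f‖_{L(log L)^s, Q}, where C depends only on n, s, ϱ, C₀. -/

import Mathlib

open MeasureTheory Set
open scoped ENNReal

/-- The Luxemburg norm `‖f‖_{L(log L)^s, Q}` on a set `Q ⊂ ℝⁿ`. -/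
noncomputable def luxNorm (n : ℕ) (s : ℝ) (Q : Set (Fin n → ℝ))
    (f : (Fin n → ℝ) → ℝ) : ℝ≥0∞ :=
  ⨅ (lam : ℝ) (_ : 0 < lam ∧
      ∫⁻ y in Q, ENNReal.ofReal
          ((|f y| / lam) * (Real.log (Real.exp 1 + |f y| / lam)) ^ s)
        ≤ volume Q),
    ENNReal.ofReal lam

/-!
If `∫_Q Φ(|f|/λ) ≤ |Q|` with `Φ(t) = t log^s(e + t)`, then, since `Φ(ct) ≤ c Φ(t)` for
`c ∈ [0, 1]`, the modular weak-type bound at height `t ≥ λ` gives the weak-`L¹` decay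
`|{|T(fχ_Q)| > t}| ≤ C₀ (λ/t) |Q|`. Splitting `Q` into `{|T(fχ_Q)| ≤ λ}` and the dyadic layers
`{2^k λ < |T(fχ_Q)| ≤ 2^(k+1) λ}`, the `ϱ`-th power is controlled by
`λ^ϱ |Q| (1 + C₀ ∑ₖ 2^((k+1)ϱ - k))`, a geometric series because `ϱ < 1`.
Taking the infimum over admissible `λ` gives the Luxemburg norm.
-/

noncomputable def youngLog (s t : ℝ) : ℝ := t * Real.log (Real.exp 1 + t) ^ s

lemma youngLog_mul_le {s c t : ℝ} (hs : 0 ≤ s) (hc0 : 0 ≤ c) (hc1 : c ≤ 1) (ht : 0 ≤ t) :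
    youngLog s (c * t) ≤ c * youngLog s t := by
  have hct : c * t ≤ t := mul_le_of_le_one_left ht hc1
  have hlog : Real.log (Real.exp 1 + c * t) ^ s ≤ Real.log (Real.exp 1 + t) ^ s := by
    have he : 1 ≤ Real.exp 1 + c * t := by
      nlinarith [Real.add_one_le_exp 1, mul_nonneg hc0 ht]
    exact Real.rpow_le_rpow (Real.log_nonneg he)
      (Real.log_le_log (by linarith) (by linarith)) hs
  rw [youngLog, youngLog, mul_assoc]
  exact mul_le_mul_of_nonneg_left (mul_le_mul_of_nonneg_left hlog ht) hc0

lemma lintegral_youngLog_indicator_le {α : Type*} [MeasurableSpace α] {μ : Measure α}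
    {s lam t : ℝ} (hs : 0 ≤ s) {Q : Set α} (hQ : MeasurableSet Q) (f : α → ℝ)
    (hlam : 0 < lam) (ht : lam ≤ t) :
    ∫⁻ x, ENNReal.ofReal (youngLog s (|Q.indicator f x| / t)) ∂μ
      ≤ ENNReal.ofReal (lam / t) * ∫⁻ x in Q, ENNReal.ofReal (youngLog s (|f x| / lam)) ∂μ := by
  have ht0 : 0 < t := hlam.trans_le ht
  have hind : (fun x => ENNReal.ofReal (youngLog s (|Q.indicator f x| / t)))
      = Q.indicator fun x => ENNReal.ofReal (youngLog s (|f x| / t)) := by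
    ext x
    by_cases hx : x ∈ Q <;> simp [hx, youngLog]
  have hpt (x : α) : ENNReal.ofReal (youngLog s (|f x| / t))
      ≤ ENNReal.ofReal (lam / t) * ENNReal.ofReal (youngLog s (|f x| / lam)) := by
    rw [← ENNReal.ofReal_mul (by positivity)]
    refine ENNReal.ofReal_le_ofReal ?_
    have hsplit : |f x| / t = lam / t * (|f x| / lam) := by field_simp
    rw [hsplit]
    exact youngLog_mul_le hs (by positivity) ((div_le_one (by linarith)).mpr ht) (by positivity)
  rw [hind, lintegral_indicator hQ, ← lintegral_const_mul' _ _ ENNReal.ofReal_ne_top]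
  exact lintegral_mono hpt

lemma exists_two_pow_mul_lt_le {a lam : ℝ} (hlam : 0 < lam) (ha : lam < a) :
    ∃ k : ℕ, 2 ^ k * lam < a ∧ a ≤ 2 ^ (k + 1) * lam := by
  obtain ⟨n, hn1, hn2⟩ := exists_mem_Ioc_zpow (div_pos (hlam.trans ha) hlam) one_lt_two
  have hn : 0 ≤ n := by
    by_contra! hneg
    have : (2 : ℝ) ^ (n + 1) ≤ 1 := zpow_le_one_of_nonpos₀ one_le_two (by omega)
    have : a / lam ≤ 1 := hn2.trans this
    rw [div_le_one hlam] at this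
    linarith
  lift n to ℕ using hn
  refine ⟨n, ?_, ?_⟩
  · simpa [lt_div_iff₀ hlam] using hn1
  · rw [div_le_iff₀ hlam] at hn2
    exact_mod_cast hn2

lemma setLIntegral_rpow_abs_le_tsum {α : Type*} [MeasurableSpace α] (μ : Measure α)
    (Q : Set α) (g : α → ℝ) {ϱ lam : ℝ} (hϱ : 0 ≤ ϱ) (hlam : 0 < lam) :
    ∫⁻ x in Q, ENNReal.ofReal (|g x| ^ ϱ) ∂μ
      ≤ ENNReal.ofReal (lam ^ ϱ) * μ Q
        + ∑' k : ℕ, ENNReal.ofReal ((2 ^ (k + 1) * lam) ^ ϱ) * μ {x | 2 ^ k * lam < |g x|} := by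
  -- `g` need not be measurable, so the layers are replaced by measurable hulls
  set E : ℕ → Set α := fun k => toMeasurable μ {x | 2 ^ k * lam < |g x|}
  set c : ℕ → ℝ≥0∞ := fun k => ENNReal.ofReal ((2 ^ (k + 1) * lam) ^ ϱ)
  have hE (k : ℕ) : MeasurableSet (E k) := measurableSet_toMeasurable _ _
  have hpt (x : α) : ENNReal.ofReal (|g x| ^ ϱ)
      ≤ ENNReal.ofReal (lam ^ ϱ) + ∑' k, (E k).indicator (fun _ => c k) x := by
    rcases le_or_gt |g x| lam with hle | hlt
    · exact (ENNReal.ofReal_le_ofReal (Real.rpow_le_rpow (abs_nonneg _) hle hϱ)).trans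
        le_self_add
    · obtain ⟨k, hk1, hk2⟩ := exists_two_pow_mul_lt_le hlam hlt
      calc ENNReal.ofReal (|g x| ^ ϱ) ≤ c k :=
            ENNReal.ofReal_le_ofReal (Real.rpow_le_rpow (abs_nonneg _) hk2 hϱ)
        _ = (E k).indicator (fun _ => c k) x :=
            (indicator_of_mem (subset_toMeasurable μ _ hk1) (fun _ => c k)).symm
        _ ≤ ∑' k, (E k).indicator (fun _ => c k) x := ENNReal.le_tsum k
        _ ≤ _ := le_add_self
  calc ∫⁻ x in Q, ENNReal.ofReal (|g x| ^ ϱ) ∂μ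
      ≤ ∫⁻ x in Q, (ENNReal.ofReal (lam ^ ϱ) + ∑' k, (E k).indicator (fun _ => c k) x) ∂μ :=
        lintegral_mono hpt
    _ = ENNReal.ofReal (lam ^ ϱ) * μ Q + ∑' k, c k * μ.restrict Q (E k) := by
        rw [lintegral_add_left measurable_const, setLIntegral_const,
          lintegral_tsum fun k => (measurable_const.indicator (hE k)).aemeasurable]
        exact congrArg _ (tsum_congr fun k => lintegral_indicator_const (hE k) _)
    _ ≤ ENNReal.ofReal (lam ^ ϱ) * μ Q + ∑' k, c k * μ {x | 2 ^ k * lam < |g x|} :=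
        add_le_add_right (ENNReal.tsum_le_tsum fun k => mul_le_mul_right
          ((Measure.restrict_le_self _).trans_eq (measure_toMeasurable _)) _) _

lemma two_pow_succ_mul_rpow_mul_div {ϱ lam : ℝ} (hlam : 0 < lam) (k : ℕ) :
    ((2 : ℝ) ^ (k + 1) * lam) ^ ϱ * (lam / (2 ^ k * lam))
      = 2 ^ ϱ * lam ^ ϱ * ((2 : ℝ) ^ (ϱ - 1)) ^ k := by
  rw [Real.mul_rpow (by positivity) hlam.le, ← Real.rpow_pow_comm zero_le_two,
    Real.rpow_sub_one two_ne_zero, div_pow]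
  field_simp
  ring

/-- Equal to `⊤` when `1 ≤ ϱ`: then `1 - 2^(ϱ-1)` truncates to `0` in `ℝ≥0∞`. -/
noncomputable def kolmogorovConst (A : ℝ≥0∞) (ϱ : ℝ) : ℝ≥0∞ :=
  1 + A * ENNReal.ofReal (2 ^ ϱ) * (1 - ENNReal.ofReal (2 ^ (ϱ - 1)))⁻¹

lemma kolmogorovConst_ne_top {A : ℝ≥0∞} {ϱ : ℝ} (hA : A ≠ ⊤) (hϱ : ϱ < 1) :
    kolmogorovConst A ϱ ≠ ⊤ := by
  have hr : ENNReal.ofReal (2 ^ (ϱ - 1)) < 1 :=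
    ENNReal.ofReal_lt_one.mpr (Real.rpow_lt_one_of_one_lt_of_neg one_lt_two (by linarith))
  have hr' : (1 - ENNReal.ofReal (2 ^ (ϱ - 1)))⁻¹ ≠ ⊤ :=
    ENNReal.inv_ne_top.mpr (tsub_pos_of_lt hr).ne'
  unfold kolmogorovConst
  finiteness

lemma setLIntegral_rpow_abs_le_of_weakType {α : Type*} [MeasurableSpace α] {μ : Measure α}
    {Q : Set α} {g : α → ℝ} {A : ℝ≥0∞} {ϱ lam : ℝ} (hϱ : 0 ≤ ϱ) (hlam : 0 < lam)
    (hg : ∀ t, lam ≤ t → μ {x | t < |g x|} ≤ A * ENNReal.ofReal (lam / t) * μ Q) :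
    ∫⁻ x in Q, ENNReal.ofReal (|g x| ^ ϱ) ∂μ
      ≤ kolmogorovConst A ϱ * ENNReal.ofReal (lam ^ ϱ) * μ Q := by
  set B := A * ENNReal.ofReal (2 ^ ϱ) * ENNReal.ofReal (lam ^ ϱ) * μ Q
  have hterm (k : ℕ) : ENNReal.ofReal ((2 ^ (k + 1) * lam) ^ ϱ) * μ {x | 2 ^ k * lam < |g x|}
      ≤ B * ENNReal.ofReal (2 ^ (ϱ - 1)) ^ k := by
    have hk : lam ≤ 2 ^ k * lam := le_mul_of_one_le_left hlam.le (one_le_pow₀ one_le_two)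
    calc _ ≤ ENNReal.ofReal ((2 ^ (k + 1) * lam) ^ ϱ)
            * (A * ENNReal.ofReal (lam / (2 ^ k * lam)) * μ Q) :=
          mul_le_mul_right (hg _ hk) _
      _ = A * ENNReal.ofReal ((2 ^ (k + 1) * lam) ^ ϱ * (lam / (2 ^ k * lam))) * μ Q := by
          rw [ENNReal.ofReal_mul (by positivity)]
          ring
      _ = B * ENNReal.ofReal (2 ^ (ϱ - 1)) ^ k := by
          rw [two_pow_succ_mul_rpow_mul_div hlam, ENNReal.ofReal_mul (by positivity),
            ENNReal.ofReal_mul (by positivity), ENNReal.ofReal_pow (by positivity)]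
          ring
  calc _ ≤ _ := setLIntegral_rpow_abs_le_tsum μ Q g hϱ hlam
    _ ≤ ENNReal.ofReal (lam ^ ϱ) * μ Q + ∑' k : ℕ, B * ENNReal.ofReal (2 ^ (ϱ - 1)) ^ k :=
        add_le_add_right (ENNReal.tsum_le_tsum hterm) _
    _ = kolmogorovConst A ϱ * ENNReal.ofReal (lam ^ ϱ) * μ Q := by
        rw [ENNReal.tsum_mul_left, ENNReal.tsum_geometric, kolmogorovConst]
        ring

lemma average_rpow_le_of_setLIntegral_le {α : Type*} [MeasurableSpace α] {μ : Measure α}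
    {Q : Set α} {g : α → ℝ} {K : ℝ≥0∞} {ϱ lam : ℝ} (hϱ : 0 < ϱ) (hlam : 0 < lam)
    (h : ∫⁻ x in Q, ENNReal.ofReal (|g x| ^ ϱ) ∂μ ≤ K * ENNReal.ofReal (lam ^ ϱ) * μ Q) :
    ((μ Q)⁻¹ * ∫⁻ x in Q, ENNReal.ofReal (|g x| ^ ϱ) ∂μ) ^ (1 / ϱ)
      ≤ K ^ (1 / ϱ) * ENNReal.ofReal lam := by
  have havg :
      (μ Q)⁻¹ * ∫⁻ x in Q, ENNReal.ofReal (|g x| ^ ϱ) ∂μ ≤ K * ENNReal.ofReal (lam ^ ϱ) :=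
    calc _ ≤ (μ Q)⁻¹ * (K * ENNReal.ofReal (lam ^ ϱ) * μ Q) := mul_le_mul_right h _
      _ = K * ENNReal.ofReal (lam ^ ϱ) * ((μ Q)⁻¹ * μ Q) := by ring
      _ ≤ K * ENNReal.ofReal (lam ^ ϱ) := mul_le_of_le_one_right' (ENNReal.inv_mul_le_one _)
  have hlam' : ENNReal.ofReal (lam ^ ϱ) ^ (1 / ϱ) = ENNReal.ofReal lam := by
    rw [ENNReal.ofReal_rpow_of_pos (by positivity), ← Real.rpow_mul hlam.le,
      mul_one_div_cancel hϱ.ne', Real.rpow_one]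
  calc _ ≤ (K * ENNReal.ofReal (lam ^ ϱ)) ^ (1 / ϱ) := ENNReal.rpow_le_rpow havg (by positivity)
    _ = K ^ (1 / ϱ) * ENNReal.ofReal lam := by
        rw [ENNReal.mul_rpow_of_nonneg _ _ (by positivity), hlam']

lemma le_mul_luxNorm {n : ℕ} {s : ℝ} {Q : Set (Fin n → ℝ)} {f : (Fin n → ℝ) → ℝ}
    {a c : ℝ≥0∞} (hc0 : c ≠ 0) (hc : c ≠ ⊤)
    (h : ∀ lam, 0 < lam → ∫⁻ y in Q, ENNReal.ofReal (youngLog s (|f y| / lam)) ≤ volume Q →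
      a ≤ c * ENNReal.ofReal lam) :
    a ≤ c * luxNorm n s Q f := by
  rw [luxNorm, ENNReal.mul_iInf_of_ne hc0 hc]
  refine le_iInf fun lam => ?_
  rw [ENNReal.mul_iInf_of_ne hc0 hc]
  exact le_iInf fun hlam => h lam hlam.1 hlam.2

theorem stmt_8_general (n : ℕ) (s C₀ : ℝ) (hs : 0 ≤ s)
    (T : ((Fin n → ℝ) → ℝ) → (Fin n → ℝ) → ℝ)
    (hweak : ∀ (f : (Fin n → ℝ) → ℝ) (lam : ℝ), 0 < lam →
      volume {x | lam < |T f x|}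
        ≤ ENNReal.ofReal C₀ *
          ∫⁻ x, ENNReal.ofReal
            ((|f x| / lam) * (Real.log (Real.exp 1 + |f x| / lam)) ^ s))
    (ϱ : ℝ) (hϱ : ϱ ∈ Set.Ioo (0 : ℝ) 1) :
    ∃ C : ℝ, 0 < C ∧
      ∀ (f : (Fin n → ℝ) → ℝ) (z : Fin n → ℝ) (r : ℝ), 0 < r →
        (((volume (Metric.closedBall z r))⁻¹
            * ∫⁻ x in Metric.closedBall z r,
                ENNReal.ofReal (|T ((Metric.closedBall z r).indicator f) x| ^ ϱ))
          ^ (1 / ϱ))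
          ≤ ENNReal.ofReal C * luxNorm n s (Metric.closedBall z r) f := by
  obtain ⟨hϱ0, hϱ1⟩ := hϱ
  set K := kolmogorovConst (ENNReal.ofReal C₀) ϱ
  have hKtop : K ≠ ⊤ := kolmogorovConst_ne_top ENNReal.ofReal_ne_top hϱ1
  have hK : K ^ (1 / ϱ) ≠ ⊤ := ENNReal.rpow_ne_top_of_nonneg (by positivity) hKtop
  have hK0 : K ^ (1 / ϱ) ≠ 0 := (ENNReal.rpow_pos (zero_lt_one.trans_le le_self_add) hKtop).ne'
  refine ⟨(K ^ (1 / ϱ)).toReal, ENNReal.toReal_pos hK0 hK, fun f z r _ => ?_⟩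
  set Q := Metric.closedBall z r
  rw [ENNReal.ofReal_toReal hK]
  refine le_mul_luxNorm hK0 hK fun lam hlam hmod => average_rpow_le_of_setLIntegral_le hϱ0 hlam
    (setLIntegral_rpow_abs_le_of_weakType hϱ0.le hlam fun t ht => ?_)
  calc volume {x | t < |T (Q.indicator f) x|}
      ≤ ENNReal.ofReal C₀ * ∫⁻ x, ENNReal.ofReal (youngLog s (|Q.indicator f x| / t)) :=
        hweak _ t (hlam.trans_le ht)
    _ ≤ ENNReal.ofReal C₀ * (ENNReal.ofReal (lam / t) * volume Q) := by
        grw [lintegral_youngLog_indicator_le hs measurableSet_closedBall f hlam ht, hmod]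
    _ = ENNReal.ofReal C₀ * ENNReal.ofReal (lam / t) * volume Q := (mul_assoc ..).symm

/-- Lemma 2.2 of the paper: a Kolmogorov-type inequality. If a sublinear
operator `T` satisfies the modular weak-type bound
`|{|Tf| > λ}| ≤ C₀ ∫ (|f|/λ) log^s(e+|f|/λ)`, then for every `ϱ ∈ (0,1)` and cube `Q`,
`(|Q|⁻¹ ∫_Q |T(fχ_Q)|^ϱ)^{1/ϱ} ≤ C ‖f‖_{L(log L)^s, Q}`. -/
theorem stmt_8 (n : ℕ) (s C₀ : ℝ) (hs : 0 ≤ s) (hC₀ : 0 < C₀)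
    (T : ((Fin n → ℝ) → ℝ) → (Fin n → ℝ) → ℝ)
    (hsub : ∀ f g : (Fin n → ℝ) → ℝ, ∀ x, |T (f + g) x| ≤ |T f x| + |T g x|)
    (hweak : ∀ (f : (Fin n → ℝ) → ℝ) (lam : ℝ), 0 < lam →
      volume {x | lam < |T f x|}
        ≤ ENNReal.ofReal C₀ *
          ∫⁻ x, ENNReal.ofReal
            ((|f x| / lam) * (Real.log (Real.exp 1 + |f x| / lam)) ^ s))
    (ϱ : ℝ) (hϱ : ϱ ∈ Set.Ioo (0 : ℝ) 1) :
    ∃ C : ℝ, 0 < C ∧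
      ∀ (f : (Fin n → ℝ) → ℝ) (z : Fin n → ℝ) (r : ℝ), 0 < r →
        (((volume (Metric.closedBall z r))⁻¹
            * ∫⁻ x in Metric.closedBall z r,
                ENNReal.ofReal (|T ((Metric.closedBall z r).indicator f) x| ^ ϱ))
          ^ (1 / ϱ))
          ≤ ENNReal.ofReal C * luxNorm n s (Metric.closedBall z r) f :=
  stmt_8_general n s C₀ hs T hweak ϱ hϱ
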